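/- For every integer n ≥ 1, the number of flattened partitions over [n+1] equals the number of set partitions of [n]; equivalently, there is a bijection between the set of flattened partitions over [n+1] and the set of partitions of [n] into disjoint nonempty blocks. -/

import Mathlib

open Finset

/-- The word of a permutation `σ` of `Fin n`: the letter at (0-based) position `i`,
viewed as a natural number (the letters are `0, 1, ..., n-1`, identified with the usual
letters `1, ..., n`); junk value `0` outside the range. -/
def entry {n : ℕ} (σ : Equiv.Perm (Fin n)) (i : ℕ) : ℕ :=
  if h : i < n then (σ ⟨i, h⟩ : ℕ) else 0

/-- Position `i` starts a run of the word `w`: either `i = 0`, or there is a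
descent at position `i - 1`. -/
def WordRunStart (w : ℕ → ℕ) (i : ℕ) : Prop :=
  i = 0 ∨ w i < w (i - 1)

instance (w : ℕ → ℕ) (i : ℕ) : Decidable (WordRunStart w i) :=
  inferInstanceAs (Decidable (i = 0 ∨ w i < w (i - 1)))

/-- The number of runs of the length-`m` word `w` (maximal consecutive increasing subwords). -/
def wordRuns (w : ℕ → ℕ) (m : ℕ) : ℕ :=
  ((Finset.range m).filter fun i => WordRunStart w i).card

/-- The length-`m` word `w` is flattened: the first entries of its runs,
read from left to right, increase. -/
def WordFlattened (w : ℕ → ℕ) (m : ℕ) : Prop :=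
  ∀ i < m, ∀ j < m, WordRunStart w i → WordRunStart w j → i < j → w i < w j

instance (w : ℕ → ℕ) (m : ℕ) : Decidable (WordFlattened w m) :=
  inferInstanceAs (Decidable (∀ i < m, ∀ j < m,
    WordRunStart w i → WordRunStart w j → i < j → w i < w j))

/-- Position `i` (0-based) starts a run of the permutation `σ`. -/
def IsRunStart {n : ℕ} (σ : Equiv.Perm (Fin n)) (i : ℕ) : Prop :=
  i < n ∧ WordRunStart (entry σ) i

instance {n : ℕ} (σ : Equiv.Perm (Fin n)) (i : ℕ) : Decidable (IsRunStart σ i) :=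
  inferInstanceAs (Decidable (i < n ∧ WordRunStart (entry σ) i))

/-- The number of runs of the permutation `σ`. -/
def runCount {n : ℕ} (σ : Equiv.Perm (Fin n)) : ℕ :=
  wordRuns (entry σ) n

/-- `σ` is a flattened partition. -/
def IsFlattened {n : ℕ} (σ : Equiv.Perm (Fin n)) : Prop :=
  WordFlattened (entry σ) n

instance {n : ℕ} (σ : Equiv.Perm (Fin n)) : Decidable (IsFlattened σ) :=
  inferInstanceAs (Decidable (WordFlattened (entry σ) n))

/-- `flatSet n k`: the set `F_{n,k}` of flattened partitions over `[n]` with exactly `k` runs. -/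
def flatSet (n k : ℕ) : Finset (Equiv.Perm (Fin n)) :=
  Finset.univ.filter fun σ => IsFlattened σ ∧ runCount σ = k

/-- `f n k = |F_{n,k}|`, the number of flattened partitions over `[n]` with exactly `k` runs. -/
def f (n k : ℕ) : ℕ := (flatSet n k).card

/-!
Write the letters as `0, …, m-1` (here `m = n + 1`). The runs of a flattened permutation `σ` are
headed by `0 = a₁ < a₂ < ⋯ < a_k`. Sending each letter `v` of the `j`-th run to `min v a_{j+1}`
(with `a_{k+1} = m`) gives an idempotent map `q` with `q v ≤ v` whose only zero is at `0`; its
fibres form a partition of the letters in which `{0}` is a block, that is, a partition of `[n]`.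

Conversely the heads `a₂, …, a_k` are the minima of the non-singleton blocks, so `q` determines
for every letter the head of the following run (`blockKey`), and `σ` is recovered as the word
listing the letters in lexicographic order of (head of the following run, letter). Starting
from any such `q`, that word is flattened: consecutive key classes meet in a descent because
every non-singleton block has an element above its minimum.
-/

section NextAbove

variable {P : ℕ → Prop} {m i j t : ℕ}

noncomputable def nextAbove (P : ℕ → Prop) (m i : ℕ) : ℕ :=
  sInf {t | i < t ∧ (m ≤ t ∨ P t)}

lemma nextAbove_spec (P : ℕ → Prop) (m i : ℕ) :
    i < nextAbove P m i ∧ (m ≤ nextAbove P m i ∨ P (nextAbove P m i)) :=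
  Nat.sInf_mem (s := {t | i < t ∧ (m ≤ t ∨ P t)}) ⟨i + m + 1, by omega, Or.inl (by omega)⟩

lemma nextAbove_le_of (hit : i < t) (ht : m ≤ t ∨ P t) : nextAbove P m i ≤ t :=
  Nat.sInf_le ⟨hit, ht⟩

lemma nextAbove_le (hi : i < m) : nextAbove P m i ≤ m :=
  nextAbove_le_of hi (Or.inl le_rfl)

lemma lt_and_not_of_lt_nextAbove (hit : i < t) (ht : t < nextAbove P m i) : t < m ∧ ¬ P t := by
  simpa [not_or] using mt (nextAbove_le_of (P := P) (m := m) hit) ht.not_ge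

lemma nextAbove_eq (hit : i < t) (ht : m ≤ t ∨ P t)
    (hmin : ∀ s, i < s → s < t → s < m ∧ ¬ P s) : nextAbove P m i = t := by
  refine le_antisymm (nextAbove_le_of hit ht) (not_lt.1 fun h => ?_)
  obtain ⟨hi, hP⟩ := nextAbove_spec P m i
  have := hmin _ hi h
  rcases hP with hP | hP
  · omega
  · exact this.2 hP

lemma nextAbove_eq_of_le (hij : i ≤ j) (hj : j < nextAbove P m i) :
    nextAbove P m j = nextAbove P m i :=
  nextAbove_eq hj (nextAbove_spec P m i).2 fun _ h₁ h₂ => lt_and_not_of_lt_nextAbove (by omega) h₂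

end NextAbove

section Runs

variable {e : ℕ → ℕ} {m i j s : ℕ}

noncomputable def nextRunHead (e : ℕ → ℕ) (m i : ℕ) : ℕ :=
  if nextAbove (WordRunStart e) m i < m then e (nextAbove (WordRunStart e) m i) else m

lemma le_of_forall_not_wordRunStart (hij : i ≤ j)
    (h : ∀ t, i < t → t ≤ j → ¬ WordRunStart e t) : e i ≤ e j := by
  induction j, hij using Nat.le_induction with
  | base => rfl
  | succ j hij ih =>
    have hj := h (j + 1) (by omega) le_rfl
    simp only [WordRunStart, Nat.add_sub_cancel, not_or, not_lt] at hj
    exact (ih fun t h₁ h₂ => h t h₁ (by omega)).trans hj.2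

lemma WordFlattened.le_of_wordRunStart (hf : WordFlattened e m) (hs : WordRunStart e s)
    (hsi : s ≤ i) (hi : i < m) : e s ≤ e i := by
  induction i, hsi using Nat.le_induction with
  | base => rfl
  | succ i hsi ih =>
    by_cases hi' : WordRunStart e (i + 1)
    · exact (hf s (by omega) (i + 1) hi hs hi' (by omega)).le
    · simp only [WordRunStart, Nat.add_sub_cancel, not_or, not_lt] at hi'
      exact (ih (by omega)).trans hi'.2

lemma exists_wordRunStart_of_nextRunHead_lt (h : nextRunHead e m i < m) :
    ∃ t, i < t ∧ t < m ∧ WordRunStart e t ∧ e t = nextRunHead e m i := by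
  obtain ⟨hit, ht⟩ := nextAbove_spec (WordRunStart e) m i
  unfold nextRunHead at h ⊢
  split_ifs at h ⊢ with htm
  · exact ⟨_, hit, htm, ht.resolve_left htm.not_ge, rfl⟩
  · exact absurd h (lt_irrefl m)

lemma nextRunHead_pred (ht : WordRunStart e i) (hi : 0 < i) (him : i < m) :
    nextRunHead e m (i - 1) = e i := by
  rw [nextRunHead, nextAbove_eq (by omega) (Or.inr ht) fun s h₁ h₂ => by omega, if_pos him]

end Runs

section PermRuns

variable {m i j v : ℕ} (σ : Equiv.Perm (Fin m))

lemma entry_of_lt (h : i < m) : entry σ i = σ ⟨i, h⟩ := dif_pos h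

lemma entry_coe (i : Fin m) : entry σ i = σ i := entry_of_lt σ i.is_lt

lemma entry_lt (h : i < m) : entry σ i < m := by
  rw [entry_of_lt σ h]
  exact Fin.is_lt _

lemma entry_inj (hi : i < m) (hj : j < m) : entry σ i = entry σ j ↔ i = j := by
  rw [entry_of_lt σ hi, entry_of_lt σ hj, Fin.val_inj, σ.apply_eq_iff_eq, Fin.mk.injEq]

lemma entry_symm_entry (h : i < m) : entry σ.symm (entry σ i) = i := by
  rw [entry_of_lt σ h, entry_of_lt σ.symm (Fin.is_lt _)]
  simp

lemma entry_entry_symm (h : v < m) : entry σ (entry σ.symm v) = v := by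
  simpa using entry_symm_entry σ.symm h

lemma exists_entry_eq (h : v < m) : ∃ i < m, entry σ i = v :=
  ⟨_, entry_lt σ.symm h, entry_entry_symm σ h⟩

lemma nextRunHead_le : nextRunHead (entry σ) m i ≤ m := by
  unfold nextRunHead
  split_ifs with h
  · exact (entry_lt σ h).le
  · rfl

variable {σ}

lemma lt_nextRunHead_of_wordRunStart (hf : IsFlattened σ) (hi : i < m)
    (hs : WordRunStart (entry σ) i) : entry σ i < nextRunHead (entry σ) m i := by
  obtain ⟨hlt, hnext⟩ := nextAbove_spec (WordRunStart (entry σ)) m i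
  unfold nextRunHead
  split_ifs with h
  · exact hf i hi _ h hs (hnext.resolve_left h.not_ge) hlt
  · exact entry_lt σ hi

lemma nextRunHead_lt_or_eq (hf : IsFlattened σ) (hij : i < j) (hj : j < m) :
    nextRunHead (entry σ) m i < nextRunHead (entry σ) m j ∨
      nextRunHead (entry σ) m i = nextRunHead (entry σ) m j ∧ entry σ i < entry σ j := by
  obtain ⟨hit, hst⟩ := nextAbove_spec (WordRunStart (entry σ)) m i
  set t := nextAbove (WordRunStart (entry σ)) m i
  by_cases hjt : j < t
  · right
    refine ⟨by rw [nextRunHead, nextRunHead, nextAbove_eq_of_le hij.le hjt], ?_⟩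
    refine lt_of_le_of_ne (le_of_forall_not_wordRunStart hij.le fun s h₁ h₂ =>
      (lt_and_not_of_lt_nextAbove (m := m) h₁ (by omega)).2)
      (mt (entry_inj σ (by omega) hj).1 hij.ne)
  · left
    obtain ⟨hjt', hsj⟩ := nextAbove_spec (WordRunStart (entry σ)) m j
    have hs : WordRunStart (entry σ) t := hst.resolve_left (by omega)
    unfold nextRunHead
    rw [if_pos (by omega)]
    split_ifs with h
    · exact hf t (by omega) _ h hs (hsj.resolve_left h.not_ge) (by omega)
    · exact entry_lt σ (by omega)

end PermRuns

def IsSortedBy (K e : ℕ → ℕ) (m : ℕ) : Prop :=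
  ∀ i j, i < j → j < m → K (e i) < K (e j) ∨ K (e i) = K (e j) ∧ e i < e j

section Sorting

variable {K e : ℕ → ℕ} {m i j : ℕ}

lemma IsSortedBy.key_le (h : IsSortedBy K e m) (hij : i ≤ j) (hj : j < m) :
    K (e i) ≤ K (e j) := by
  rcases hij.lt_or_eq with hij | rfl
  · rcases h i j hij hj with h | h
    · exact h.le
    · exact h.1.le
  · rfl

lemma IsSortedBy.le_of_key_eq (h : IsSortedBy K e m) (hij : i ≤ j) (hj : j < m)
    (heq : K (e i) = K (e j)) : e i ≤ e j := by
  rcases hij.lt_or_eq with hij | rfl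
  · exact ((h i j hij hj).resolve_left heq.not_lt).2.le
  · rfl

lemma eq_sort_iff_isSortedBy {σ : Equiv.Perm (Fin m)} :
    σ = Tuple.sort (fun v : Fin m => K v) ↔ IsSortedBy K (entry σ) m := by
  rw [Tuple.eq_sort_iff]
  constructor
  · rintro ⟨hmono, htie⟩ i j hij hj
    have hi : i < m := hij.trans hj
    rw [entry_of_lt σ hi, entry_of_lt σ hj]
    rcases (hmono (show (⟨i, hi⟩ : Fin m) ≤ ⟨j, hj⟩ from hij.le)).lt_or_eq with h | h
    · exact Or.inl h
    · exact Or.inr ⟨h, htie _ _ hij h⟩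
  · intro h
    refine ⟨fun i j hij => ?_, fun i j hij heq => ?_⟩
    · have := h.key_le (Fin.le_iff_val_le_val.1 hij) j.is_lt
      rw [entry_coe, entry_coe] at this
      exact this
    · have := h i j hij j.is_lt
      simp only [entry_coe, Fin.val_fin_lt] at this
      exact (this.resolve_left heq.not_lt).2

end Sorting

/-- A partition of `{0, …, m-1}` having `{0}` as a block, encoded by the map sending each
element to the least element of its block; the map fixes every `v ≥ m`. -/
@[ext]
structure BlockMinMap (m : ℕ) where
  toFun : ℕ → ℕ
  map_le : ∀ v, toFun v ≤ v
  map_map : ∀ v, toFun (toFun v) = toFun v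
  eq_zero_of_map_eq_zero : ∀ v, toFun v = 0 → v = 0
  map_of_le : ∀ v, m ≤ v → toFun v = v

def IsProperImage (q : ℕ → ℕ) (c : ℕ) : Prop := ∃ w, q w = c ∧ w ≠ c

/-- A letter that is not a block minimum belongs to the run just before the one headed by its
block minimum; a block minimum belongs to the run before the one headed by the next minimum of a
non-singleton block. Either way `blockKey` is the head of the following run
(`blockKey_flatBlockMin`). -/
noncomputable def blockKey (q : ℕ → ℕ) (m v : ℕ) : ℕ :=
  if q v = v then nextAbove (IsProperImage q) m v else q v

namespace BlockMinMap

variable {m c v w : ℕ} (q : BlockMinMap m)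

instance : CoeFun (BlockMinMap m) (fun _ => ℕ → ℕ) := ⟨toFun⟩

lemma map_zero : q 0 = 0 := Nat.le_zero.1 (q.map_le 0)

lemma map_pos (hv : 0 < v) : 0 < q v :=
  Nat.pos_of_ne_zero fun h => hv.ne' (q.eq_zero_of_map_eq_zero v h)

variable {q}

lemma map_eq_of_isProperImage (hc : IsProperImage q c) : q c = c := by
  obtain ⟨w, rfl, -⟩ := hc
  exact q.map_map w

lemma lt_of_isProperImage (hc : IsProperImage q c) : c < m := by
  obtain ⟨w, rfl, hw⟩ := hc
  by_contra h
  exact hw (q.map_of_le w (by have := q.map_le w; omega)).symm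

lemma pos_of_isProperImage (hc : IsProperImage q c) : 0 < c := by
  obtain ⟨w, rfl, hw⟩ := hc
  exact q.map_pos (Nat.pos_of_ne_zero fun h => hw (h ▸ q.map_zero).symm)

lemma blockKey_eq_or_isProperImage (hv : v < m) :
    blockKey q m v = m ∨ IsProperImage q (blockKey q m v) := by
  unfold blockKey
  split_ifs with h
  · have := nextAbove_le (P := IsProperImage q) hv
    rcases (nextAbove_spec (IsProperImage q) m v).2 with h' | h'
    · omega
    · exact Or.inr h'
  · exact Or.inr ⟨v, rfl, Ne.symm h⟩

lemma blockKey_le (hv : v < m) : blockKey q m v ≤ m := by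
  rcases blockKey_eq_or_isProperImage hv with h | h
  · exact h.le
  · exact (lt_of_isProperImage h).le

lemma blockKey_pos (hv : v < m) : 0 < blockKey q m v := by
  rcases blockKey_eq_or_isProperImage (q := q) hv with h | h
  · omega
  · exact pos_of_isProperImage h

lemma isProperImage_of_blockKey_lt (hv : v < m) (hw : w < m)
    (h : blockKey q m v < blockKey q m w) : IsProperImage q (blockKey q m v) :=
  (blockKey_eq_or_isProperImage hv).resolve_left fun h' => by
    have := blockKey_le (q := q) hw
    omega

lemma lt_blockKey_of_map_eq (h : q v = v) : v < blockKey q m v := by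
  rw [blockKey, if_pos h]
  exact (nextAbove_spec _ m v).1

lemma le_of_lt_blockKey (hc : IsProperImage q c) (h : c < blockKey q m w) : c ≤ w := by
  unfold blockKey at h
  split_ifs at h with hw
  · by_contra hcw
    exact (nextAbove_le_of (by omega) (Or.inr hc)).not_gt h
  · exact h.le.trans (q.map_le w)

lemma blockKey_le_blockKey_of_map_eq (hc : q c = c) (hv : v < m) (h : c < blockKey q m v) :
    blockKey q m c ≤ blockKey q m v := by
  rw [blockKey, if_pos hc]
  rcases blockKey_eq_or_isProperImage hv with h' | h'
  · exact nextAbove_le_of h (Or.inl h'.ge)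
  · exact nextAbove_le_of h (Or.inr h')

lemma blockKey_zero_le (hv : v < m) : blockKey q m 0 ≤ blockKey q m v :=
  blockKey_le_blockKey_of_map_eq q.map_zero hv (blockKey_pos hv)

lemma exists_blockKey_eq (hc : IsProperImage q c) :
    ∃ w < m, blockKey q m w = c ∧ c < w := by
  obtain ⟨w, hwc, hw⟩ := id hc
  have hcw : c < w := lt_of_le_of_ne (hwc ▸ q.map_le w) hw.symm
  refine ⟨w, ?_, by rw [blockKey, if_neg (by omega), hwc], hcw⟩
  by_contra h
  exact hw (hwc ▸ q.map_of_le w (by omega)).symm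

lemma min_blockKey (v : ℕ) : min v (blockKey q m v) = q v := by
  by_cases h : q v = v
  · rw [h]
    exact min_eq_left (lt_blockKey_of_map_eq h).le
  · rw [blockKey, if_neg h]
    exact min_eq_right (q.map_le v)

end BlockMinMap

noncomputable def flatBlockMin {m : ℕ} (σ : Equiv.Perm (Fin m)) (v : ℕ) : ℕ :=
  if v < m then min v (nextRunHead (entry σ) m (entry σ.symm v)) else v

section Flattened

variable {m c i v : ℕ} {σ : Equiv.Perm (Fin m)}

lemma flatBlockMin_entry (hi : i < m) :
    flatBlockMin σ (entry σ i) = min (entry σ i) (nextRunHead (entry σ) m i) := by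
  rw [flatBlockMin, if_pos (entry_lt σ hi), entry_symm_entry σ hi]

lemma flatBlockMin_eq_of_le (hv : m ≤ v) : flatBlockMin σ v = v := if_neg (by omega)

lemma flatBlockMin_le (v : ℕ) : flatBlockMin σ v ≤ v := by
  unfold flatBlockMin
  split_ifs
  exacts [min_le_left _ _, le_rfl]

lemma isProperImage_flatBlockMin_iff :
    IsProperImage (flatBlockMin σ) c ↔
      ∃ t, 0 < t ∧ t < m ∧ WordRunStart (entry σ) t ∧ entry σ t = c := by
  constructor
  · rintro ⟨w, hwc, hw⟩
    have hwm : w < m := by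
      by_contra h
      exact hw (hwc ▸ flatBlockMin_eq_of_le (by omega)).symm
    obtain ⟨i, hi, rfl⟩ := exists_entry_eq σ hwm
    rw [flatBlockMin_entry hi] at hwc
    obtain ⟨t, hit, htm, hst, het⟩ :=
      exists_wordRunStart_of_nextRunHead_lt (e := entry σ) (m := m) (i := i) (by omega)
    exact ⟨t, by omega, htm, hst, by omega⟩
  · rintro ⟨t, ht0, htm, hst, rfl⟩
    have hdesc : entry σ t < entry σ (t - 1) := hst.resolve_left ht0.ne'
    refine ⟨entry σ (t - 1), ?_, hdesc.ne'⟩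
    rw [flatBlockMin_entry (by omega), nextRunHead_pred hst ht0 htm]
    exact min_eq_right hdesc.le

variable (hf : IsFlattened σ)
include hf

noncomputable def toBlockMinMap : BlockMinMap m where
  toFun := flatBlockMin σ
  map_le := flatBlockMin_le
  map_map v := by
    by_cases hv : m ≤ v
    · rw [flatBlockMin_eq_of_le hv, flatBlockMin_eq_of_le hv]
    obtain ⟨i, hi, rfl⟩ := exists_entry_eq σ (not_le.1 hv)
    rw [flatBlockMin_entry hi]
    rcases le_or_gt (entry σ i) (nextRunHead (entry σ) m i) with h | h
    · rw [min_eq_left h, flatBlockMin_entry hi, min_eq_left h]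
    · obtain ⟨t, -, htm, hst, het⟩ :=
        exists_wordRunStart_of_nextRunHead_lt (h.trans (entry_lt σ hi))
      rw [min_eq_right h.le, ← het, flatBlockMin_entry htm,
        min_eq_left (lt_nextRunHead_of_wordRunStart hf htm hst).le]
  eq_zero_of_map_eq_zero v h := by
    by_contra hv0
    have hv : v < m := by
      by_contra hv
      rw [flatBlockMin_eq_of_le (by omega)] at h
      exact hv0 h
    obtain ⟨i, hi, rfl⟩ := exists_entry_eq σ hv
    rw [flatBlockMin_entry hi] at h
    obtain ⟨t, hit, htm, hst, het⟩ :=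
      exists_wordRunStart_of_nextRunHead_lt (e := entry σ) (m := m) (i := i) (by omega)
    have := hf 0 (by omega) t htm (Or.inl rfl) hst (by omega)
    omega
  map_of_le _ := flatBlockMin_eq_of_le

lemma blockKey_flatBlockMin (hi : i < m) :
    blockKey (flatBlockMin σ) m (entry σ i) = nextRunHead (entry σ) m i := by
  have hk := nextRunHead_le σ (i := i)
  rw [blockKey, flatBlockMin_entry hi]
  split_ifs with h
  · have hle : entry σ i ≤ nextRunHead (entry σ) m i := by omega
    refine nextAbove_eq (lt_of_le_of_ne hle fun heq => ?_) ?_ fun s h₁ h₂ => ⟨by omega, ?_⟩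
    · obtain ⟨t, hit, htm, -, het⟩ := exists_wordRunStart_of_nextRunHead_lt (heq ▸ entry_lt σ hi)
      exact hit.ne ((entry_inj σ hi htm).1 (heq.trans het.symm))
    · rcases hk.lt_or_eq with hk | hk
      · obtain ⟨t, hit, htm, hst, het⟩ := exists_wordRunStart_of_nextRunHead_lt hk
        exact Or.inr (isProperImage_flatBlockMin_iff.2 ⟨t, by omega, htm, hst, het⟩)
      · exact Or.inl hk.ge
    · intro hs
      obtain ⟨t, -, htm, hst, rfl⟩ := isProperImage_flatBlockMin_iff.1 hs
      rcases le_or_gt t i with hti | hit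
      · have := WordFlattened.le_of_wordRunStart hf hst hti hi
        omega
      · obtain ⟨hiu, hu⟩ := nextAbove_spec (WordRunStart (entry σ)) m i
        have hut := nextAbove_le_of (m := m) hit (Or.inr hst)
        have := WordFlattened.le_of_wordRunStart hf (hu.resolve_left (by omega)) hut htm
        rw [nextRunHead, if_pos (by omega)] at h₂
        omega
  · omega

lemma isSortedBy_flatBlockMin : IsSortedBy (blockKey (flatBlockMin σ) m) (entry σ) m := by
  intro i j hij hj
  rw [blockKey_flatBlockMin hf (hij.trans hj), blockKey_flatBlockMin hf hj]
  exact nextRunHead_lt_or_eq hf hij hj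

lemma eq_sort_blockKey_flatBlockMin :
    σ = Tuple.sort (fun v : Fin m => blockKey (flatBlockMin σ) m v) :=
  eq_sort_iff_isSortedBy.2 (isSortedBy_flatBlockMin hf)

end Flattened

section Sorted

variable {m c i t : ℕ} {q : BlockMinMap m} {τ : Equiv.Perm (Fin m)}
variable (hs : IsSortedBy (blockKey q m) (entry τ) m)
include hs

lemma IsSortedBy.entry_zero (hm : 0 < m) : entry τ 0 = 0 := by
  obtain ⟨j, hj, hej⟩ := exists_entry_eq τ hm
  rcases Nat.eq_zero_or_pos j with rfl | h
  · exact hej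
  · have := BlockMinMap.blockKey_zero_le (q := q) (entry_lt τ hm)
    have h' := hs 0 j h hj
    rw [hej] at h'
    omega

lemma IsSortedBy.lt_entry_symm (hc : IsProperImage q c) (hi : i < m)
    (hic : blockKey q m (entry τ i) = c) : i < entry τ.symm c := by
  have hcm := BlockMinMap.lt_of_isProperImage hc
  have hkc := BlockMinMap.lt_blockKey_of_map_eq (m := m) (BlockMinMap.map_eq_of_isProperImage hc)
  by_contra h
  have := hs.key_le (not_lt.1 h) hi
  rw [entry_entry_symm τ hcm] at this
  omega

lemma IsSortedBy.blockKey_lt_entry (ht : t + 1 < m)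
    (hlt : blockKey q m (entry τ t) < blockKey q m (entry τ (t + 1))) :
    blockKey q m (entry τ t) < entry τ t := by
  obtain ⟨w, hw, hKw, hcw⟩ := BlockMinMap.exists_blockKey_eq
    (BlockMinMap.isProperImage_of_blockKey_lt (entry_lt τ (by omega)) (entry_lt τ ht) hlt)
  obtain ⟨j, hj, rfl⟩ := exists_entry_eq τ hw
  have hjt : j ≤ t := by
    by_contra h
    have := hs.key_le (show t + 1 ≤ j by omega) hj
    omega
  have := hs.le_of_key_eq hjt (by omega) hKw
  omega

lemma IsSortedBy.entry_succ_eq_blockKey (ht : t + 1 < m)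
    (hlt : blockKey q m (entry τ t) < blockKey q m (entry τ (t + 1))) :
    entry τ (t + 1) = blockKey q m (entry τ t) := by
  have hc := BlockMinMap.isProperImage_of_blockKey_lt (entry_lt τ (by omega)) (entry_lt τ ht) hlt
  refine le_antisymm ?_ (BlockMinMap.le_of_lt_blockKey hc hlt)
  obtain ⟨k, hk, hkc⟩ := exists_entry_eq τ (BlockMinMap.lt_of_isProperImage hc)
  have htk : t < k := by
    simpa [← hkc, entry_symm_entry τ hk] using hs.lt_entry_symm hc (by omega) rfl
  have hK := BlockMinMap.blockKey_le_blockKey_of_map_eq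
    (BlockMinMap.map_eq_of_isProperImage hc) (entry_lt τ ht) hlt
  rw [← hkc] at hK ⊢
  exact hs.le_of_key_eq (show t + 1 ≤ k by omega) hk (le_antisymm (hs.key_le (by omega) hk) hK)

lemma IsSortedBy.wordRunStart_succ_iff (ht : t + 1 < m) :
    WordRunStart (entry τ) (t + 1) ↔
      blockKey q m (entry τ t) < blockKey q m (entry τ (t + 1)) := by
  refine ⟨fun h => ?_, fun h => Or.inr ?_⟩
  · have hdesc : entry τ (t + 1) < entry τ t := h.resolve_left (by omega)
    rcases hs t (t + 1) (by omega) ht with h' | h'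
    · exact h'
    · omega
  · rw [Nat.add_sub_cancel, hs.entry_succ_eq_blockKey ht h]
    exact hs.blockKey_lt_entry ht h

lemma IsSortedBy.isFlattened : IsFlattened τ := by
  intro i hi j hj hsi hsj hij
  obtain ⟨j, rfl⟩ : ∃ j', j = j' + 1 := ⟨j - 1, by omega⟩
  have hjump := (hs.wordRunStart_succ_iff hj).1 hsj
  rw [hs.entry_succ_eq_blockKey hj hjump]
  rcases Nat.eq_zero_or_pos i with rfl | hi0
  · rw [hs.entry_zero hi]
    exact BlockMinMap.blockKey_pos (entry_lt τ (by omega))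
  · obtain ⟨i, rfl⟩ : ∃ i', i = i' + 1 := ⟨i - 1, by omega⟩
    have hjump' := (hs.wordRunStart_succ_iff hi).1 hsi
    rw [hs.entry_succ_eq_blockKey hi hjump']
    exact hjump'.trans_le (hs.key_le (by omega) (by omega))

lemma IsSortedBy.blockKey_eq_of_lt_nextAbove {j : ℕ} (hij : i ≤ j)
    (hj : j < nextAbove (WordRunStart (entry τ)) m i) :
    blockKey q m (entry τ i) = blockKey q m (entry τ j) := by
  induction j, hij using Nat.le_induction with
  | base => rfl
  | succ j hij ih =>
    have hns := (lt_and_not_of_lt_nextAbove (m := m) (by omega) hj).2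
    have hjm := (lt_and_not_of_lt_nextAbove (m := m) (by omega) hj).1
    rw [hs.wordRunStart_succ_iff hjm] at hns
    exact (ih (by omega)).trans (le_antisymm (hs.key_le (by omega) hjm) (not_lt.1 hns))

lemma IsSortedBy.nextRunHead_eq_blockKey (hi : i < m) :
    nextRunHead (entry τ) m i = blockKey q m (entry τ i) := by
  obtain ⟨hiu, hus⟩ := nextAbove_spec (WordRunStart (entry τ)) m i
  have hum := nextAbove_le (P := WordRunStart (entry τ)) hi
  obtain ⟨u, hu⟩ : ∃ u, nextAbove (WordRunStart (entry τ)) m i = u + 1 :=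
    ⟨_, (Nat.sub_add_cancel (by omega)).symm⟩
  have hlast := hs.blockKey_eq_of_lt_nextAbove (show i ≤ u by omega) (by omega)
  unfold nextRunHead
  rw [hu] at hus hum ⊢
  split_ifs with h
  · have hjump := (hs.wordRunStart_succ_iff h).1 (hus.resolve_left h.not_ge)
    rw [hs.entry_succ_eq_blockKey h hjump, hlast]
  · rw [hlast]
    rcases BlockMinMap.blockKey_eq_or_isProperImage (q := q) (entry_lt τ (show u < m by omega))
      with h' | h'
    · exact h'.symm
    · have := hs.lt_entry_symm h' (by omega) rfl
      have := entry_lt τ.symm (BlockMinMap.lt_of_isProperImage h')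
      omega

lemma IsSortedBy.flatBlockMin_eq : flatBlockMin τ = q := by
  funext v
  by_cases hv : v < m
  · rw [flatBlockMin, if_pos hv, hs.nextRunHead_eq_blockKey (entry_lt τ.symm hv),
      entry_entry_symm τ hv, BlockMinMap.min_blockKey]
  · rw [flatBlockMin_eq_of_le (by omega), q.map_of_le v (by omega)]

end Sorted

noncomputable def flattenedEquivBlockMinMap (m : ℕ) :
    {σ : Equiv.Perm (Fin m) // IsFlattened σ} ≃ BlockMinMap m :=
  Equiv.ofBijective (fun σ => toBlockMinMap σ.2) <| by
    refine ⟨fun σ τ h => Subtype.ext ?_, fun q => ?_⟩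
    · have hστ : flatBlockMin σ.1 = flatBlockMin τ.1 := congrArg BlockMinMap.toFun h
      have := eq_sort_blockKey_flatBlockMin σ.2
      rwa [hστ, ← eq_sort_blockKey_flatBlockMin τ.2] at this
    · have hs := eq_sort_iff_isSortedBy.1 (rfl : Tuple.sort (fun v : Fin m => blockKey q m v) = _)
      exact ⟨⟨_, hs.isFlattened⟩, BlockMinMap.ext hs.flatBlockMin_eq⟩

def BlockMinMap.equivFin (n : ℕ) :
    BlockMinMap (n + 1) ≃ {r : Fin n → Fin n // (∀ a, r (r a) = r a) ∧ ∀ a, r a ≤ a} where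
  toFun q := by
    refine ⟨fun v => ⟨q (v + 1) - 1, ?_⟩, fun v => Fin.ext ?_, fun v => ?_⟩
    · have := q.map_le (v + 1)
      omega
    · simp only [Nat.sub_add_cancel (q.map_pos (Nat.succ_pos v)), q.map_map]
    · have := q.map_le (v + 1)
      rw [Fin.le_iff_val_le_val]
      dsimp only
      omega
  invFun r := {
    toFun := fun v => if h : 0 < v ∧ v ≤ n then r.1 ⟨v - 1, by omega⟩ + 1 else v
    map_le := fun v => by
      split_ifs with h
      · have := Fin.le_iff_val_le_val.1 (r.2.2 ⟨v - 1, by omega⟩)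
        dsimp only at this
        omega
      · exact le_rfl
    map_map := fun v => by
      split_ifs with h h'
      · simp only [Nat.add_sub_cancel, Fin.eta, r.2.1 ⟨v - 1, by omega⟩]
      · exact absurd ⟨by omega, by omega⟩ h'
      · rfl
    eq_zero_of_map_eq_zero := fun v hv => by
      split_ifs at hv
      omega
    map_of_le := fun v hv => dif_neg (by omega) }
  left_inv q := by
    ext v
    dsimp only
    split_ifs with h
    · rw [Nat.sub_add_cancel h.1, Nat.sub_add_cancel (q.map_pos h.1)]
    · rcases Nat.eq_zero_or_pos v with rfl | hv
      · exact q.map_zero.symm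
      · exact (q.map_of_le v (by omega)).symm
  right_inv r := by
    apply Subtype.ext
    funext v
    apply Fin.ext
    simp

section Finpartition

variable {α : Type*} [Fintype α] [LinearOrder α]

lemma Finpartition.parts_eq_image_part (P : Finpartition (univ : Finset α)) :
    P.parts = univ.image P.part := by
  ext t
  refine ⟨fun ht => ?_, fun ht => ?_⟩
  · obtain ⟨a, ha⟩ := P.nonempty_of_mem_parts ht
    exact mem_image.2 ⟨a, mem_univ a, P.part_eq_of_mem ht ha⟩
  · obtain ⟨a, -, rfl⟩ := mem_image.1 ht
    exact P.part_mem.2 (mem_univ a)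

noncomputable def Finpartition.partMin (P : Finpartition (univ : Finset α)) (a : α) : α :=
  (P.part a).min' (P.part_nonempty.2 (mem_univ a))

lemma Finpartition.partMin_mem (P : Finpartition (univ : Finset α)) (a : α) :
    P.partMin a ∈ P.part a :=
  min'_mem _ _

lemma Finpartition.partMin_eq_iff (P : Finpartition (univ : Finset α)) {a b : α} :
    P.partMin a = P.partMin b ↔ b ∈ P.part a := by
  have hpart : ∀ {a b}, b ∈ P.part a → P.part b = P.part a := fun h =>
    P.part_eq_of_mem (P.part_mem.2 (mem_univ _)) h
  refine ⟨fun h => ?_, fun h => ?_⟩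
  · have hb : P.partMin a ∈ P.part b := by
      rw [h]
      exact P.partMin_mem b
    rw [← hpart (P.partMin_mem a), hpart hb]
    exact P.mem_part (mem_univ b)
  · unfold Finpartition.partMin
    simp only [hpart h]

open Classical in
noncomputable def idempotentLEEquivFinpartition :
    {r : α → α // (∀ a, r (r a) = r a) ∧ ∀ a, r a ≤ a} ≃ Finpartition (univ : Finset α) where
  toFun r := Finpartition.ofSetoid (Setoid.ker r.1)
  invFun P := ⟨P.partMin, fun a => (P.partMin_eq_iff.2 (P.partMin_mem a)).symm,
    fun a => min'_le _ _ (P.mem_part (mem_univ a))⟩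
  left_inv r := by
    apply Subtype.ext
    funext a
    set P := Finpartition.ofSetoid (Setoid.ker r.1)
    have hmem : ∀ b, b ∈ P.part a ↔ r.1 a = r.1 b :=
      fun b => Finpartition.mem_part_ofSetoid_iff_rel.trans Setoid.ker_def
    show P.partMin a = r.1 a
    refine le_antisymm (min'_le _ _ ((hmem _).2 (r.2.1 a).symm)) (le_min' _ _ _ fun b hb => ?_)
    rw [(hmem b).1 hb]
    exact r.2.2 b
  right_inv P := by
    ext1
    refine (Finpartition.ofSetSetoid_parts _ _).trans ?_
    rw [P.parts_eq_image_part]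
    congr 1
    funext a
    ext b
    simp only [mem_filter, mem_univ, true_and, Setoid.ker_def]
    exact P.partMin_eq_iff

end Finpartition

theorem flattened_equiv_partitions_general (n : ℕ) :
    Nonempty ({σ : Equiv.Perm (Fin (n + 1)) // IsFlattened σ} ≃
      Finpartition (Finset.univ : Finset (Fin n))) :=
  ⟨(flattenedEquivBlockMinMap (n + 1)).trans
    ((BlockMinMap.equivFin n).trans idempotentLEEquivFinpartition)⟩

/-- For every integer `n ≥ 1`, there is a bijection between the set of flattened partitions
over `[n+1]` and the set of set partitions of `[n]` (partitions of `Fin n` into disjoint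
nonempty blocks); in particular the two sets have the same cardinality. -/
theorem flattened_equiv_partitions (n : ℕ) (hn : 1 ≤ n) :
    Nonempty ({σ : Equiv.Perm (Fin (n + 1)) // IsFlattened σ} ≃
      Finpartition (Finset.univ : Finset (Fin n))) :=
  flattened_equiv_partitions_general n
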